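/- arXiv:2304.13710 — 8 statements merged into one kernel-verified Lean document; each statement's English description precedes it below -/
import Mathlib

section
/- Let s be a random vector in {-1,1}^M with i.i.d. uniform (mean-zero) entries and let β ≤ 1. If p ∈ ℝ^M satisfies the self-consistency equation p = E_s[ s · tanh(β s·p) ] (componentwise, i.e. p_μ = E[s_μ tanh(β Σ_ν s_ν p_ν)] for all μ), then p = 0. -/
/-!
Write `F s = ∑ ν, s_ν p_ν` for the field felt by the sign vector `s`. Multiplying the
self-consistency equation by `p_μ` and summing over `μ` gives
`E[F s ^ 2] = |p|² = E[F s * tanh (β F s)]`, the first equality because distinct signs are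
orthogonal. But `z * tanh (β z) < z ^ 2` for `z ≠ 0` when `β ≤ 1`, so `F` vanishes
identically, and then the equation itself gives `p = 0`.
-/

open Finset Real

namespace Real

theorem tanh_nonpos {x : ℝ} (hx : x ≤ 0) : tanh x ≤ 0 := by
  rw [tanh_eq_sinh_div_cosh]
  exact div_nonpos_of_nonpos_of_nonneg (sinh_nonpos_iff.2 hx) (cosh_pos x).le

theorem tanh_lt_self {x : ℝ} (hx : 0 < x) : tanh x < x := by
  set g : ℝ → ℝ := fun t => t * cosh t - sinh t
  have hg : ∀ t, HasDerivAt g (t * sinh t) t := fun t =>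
    (((hasDerivAt_id' t).mul (hasDerivAt_cosh t)).sub (hasDerivAt_sinh t)).congr_deriv (by ring)
  have hmono : StrictMonoOn g (Set.Ici 0) := by
    refine strictMonoOn_of_deriv_pos (convex_Ici 0) ?_ fun t ht => ?_
    · exact (continuous_id.mul continuous_cosh |>.sub continuous_sinh).continuousOn
    · rw [interior_Ici] at ht
      rw [(hg t).deriv]
      exact mul_pos ht (sinh_pos_iff.2 ht)
  have hgx : g 0 < g x := hmono Set.self_mem_Ici hx.le hx
  simp only [g, zero_mul, cosh_zero, sinh_zero, sub_zero] at hgx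
  rw [tanh_eq_sinh_div_cosh, div_lt_iff₀ (cosh_pos x)]
  linarith

theorem tanh_lt_of_le {x y : ℝ} (hy : 0 < y) (hxy : x ≤ y) : tanh x < y := by
  rcases le_or_gt x 0 with hx | hx
  · exact (tanh_nonpos hx).trans_lt hy
  · exact (tanh_lt_self hx).trans_le hxy

theorem mul_tanh_mul_lt_sq {β z : ℝ} (hβ : β ≤ 1) (hz : z ≠ 0) : z * tanh (β * z) < z ^ 2 := by
  have key : ∀ w : ℝ, 0 < w → w * tanh (β * w) < w ^ 2 := fun w hw => by
    rw [sq]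
    exact mul_lt_mul_of_pos_left (tanh_lt_of_le hw (by nlinarith)) hw
  rcases hz.lt_or_gt with hz | hz
  · simpa [mul_neg, tanh_neg] using key (-z) (neg_pos.2 hz)
  · exact key z hz

theorem mul_tanh_mul_le_sq {β : ℝ} (hβ : β ≤ 1) (z : ℝ) : z * tanh (β * z) ≤ z ^ 2 := by
  rcases eq_or_ne z 0 with rfl | hz
  · simp
  · exact (mul_tanh_mul_lt_sq hβ hz).le

end Real

def boolSign (b : Bool) : ℝ := if b then 1 else -1

@[simp] theorem boolSign_mul_self (b : Bool) : boolSign b * boolSign b = 1 := by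
  cases b <;> norm_num [boolSign]

@[simp] theorem boolSign_not (b : Bool) : boolSign (!b) = -boolSign b := by
  cases b <;> simp [boolSign]

section SignVectors

variable {ι : Type*} [Fintype ι] [DecidableEq ι]

theorem sum_boolSign_mul_boolSign (i j : ι) :
    ∑ s : ι → Bool, boolSign (s i) * boolSign (s j) =
      if i = j then (2 : ℝ) ^ Fintype.card ι else 0 := by
  split_ifs with hij
  · subst hij
    simp
  · -- flipping the `i`-th sign is a bijection of the cube that negates each summand
    set flip : (ι → Bool) → ι → Bool := fun s => Function.update s i (!s i)
    have hflip : Function.Involutive flip := fun s => by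
      ext k; by_cases hk : k = i <;> simp [flip, Function.update, hk]
    have h := Fintype.sum_equiv hflip.toPerm (fun s => boolSign (s i) * boolSign (s j))
      (fun s => -(boolSign (s i) * boolSign (s j))) fun s => by
        simp [flip, Function.update_of_ne (Ne.symm hij)]
    rw [Finset.sum_neg_distrib] at h
    linarith

theorem sum_sq_sum_boolSign_mul (p : ι → ℝ) :
    ∑ s : ι → Bool, (∑ i, boolSign (s i) * p i) ^ 2 = (2 : ℝ) ^ Fintype.card ι * ∑ i, p i ^ 2 := by
  calc ∑ s : ι → Bool, (∑ i, boolSign (s i) * p i) ^ 2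
      = ∑ i, ∑ j, (∑ s : ι → Bool, boolSign (s i) * boolSign (s j)) * (p i * p j) := by
        simp_rw [sq, Finset.sum_mul_sum, Finset.sum_mul]
        rw [Finset.sum_comm]
        refine Finset.sum_congr rfl fun i _ => ?_
        rw [Finset.sum_comm]
        exact Finset.sum_congr rfl fun j _ => Finset.sum_congr rfl fun s _ => by ring
    _ = (2 : ℝ) ^ Fintype.card ι * ∑ i, p i ^ 2 := by
        simp [sum_boolSign_mul_boolSign, Finset.mul_sum, sq]

theorem sum_mul_sum_boolSign_mul (p : ι → ℝ) (g : (ι → Bool) → ℝ) :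
    ∑ i, p i * ∑ s : ι → Bool, boolSign (s i) * g s =
      ∑ s : ι → Bool, (∑ i, boolSign (s i) * p i) * g s := by
  simp only [Finset.mul_sum, Finset.sum_mul]
  rw [Finset.sum_comm]
  exact Finset.sum_congr rfl fun s _ => Finset.sum_congr rfl fun i _ => by ring

end SignVectors

theorem selfconsistency_only_zero_highT_general
    (M : ℕ) (β : ℝ) (hβ1 : β ≤ 1)
    (p : Fin M → ℝ)
    (hp : ∀ μ : Fin M,
      p μ = (1 / (2:ℝ) ^ M) * ∑ s : Fin M → Bool,
        (if s μ then (1:ℝ) else -1) *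
          Real.tanh (β * ∑ ν : Fin M, (if s ν then (1:ℝ) else -1) * p ν)) :
    p = 0 := by
  set F : (Fin M → Bool) → ℝ := fun s => ∑ ν, boolSign (s ν) * p ν
  have hfix : ∀ μ, p μ = (1 / (2:ℝ) ^ M) * ∑ s, boolSign (s μ) * tanh (β * F s) := hp
  have hmoment : ∑ s, F s * tanh (β * F s) = ∑ s, F s ^ 2 := by
    calc ∑ s, F s * tanh (β * F s)
        = ∑ μ, p μ * ∑ s, boolSign (s μ) * tanh (β * F s) :=
          (sum_mul_sum_boolSign_mul p _).symm
      _ = (2 : ℝ) ^ M * ∑ μ, p μ ^ 2 := by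
          rw [Finset.mul_sum]
          refine Finset.sum_congr rfl fun μ _ => ?_
          rw [hfix μ]
          field_simp
      _ = ∑ s, F s ^ 2 := by
          simpa using (sum_sq_sum_boolSign_mul p).symm
  have hF : ∀ s, F s = 0 := fun s => by
    by_contra hs
    have heq := (Finset.sum_eq_sum_iff_of_le fun s _ => mul_tanh_mul_le_sq hβ1 (F s)).1 hmoment s
      (Finset.mem_univ s)
    exact (mul_tanh_mul_lt_sq hβ1 hs).ne heq
  funext μ
  simp [hfix μ, hF]

/-- For β ≤ 1, the only solution of the self-consistency equation
`p_μ = E_s[s_μ tanh(β s·p)]` (uniform i.i.d. signs s) is `p = 0`. -/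
theorem selfconsistency_only_zero_highT
    (M : ℕ) (hM : 1 ≤ M) (β : ℝ) (hβ0 : 0 ≤ β) (hβ1 : β ≤ 1)
    (p : Fin M → ℝ)
    (hp : ∀ μ : Fin M,
      p μ = (1 / (2:ℝ) ^ M) * ∑ s : Fin M → Bool,
        (if s μ then (1:ℝ) else -1) *
          Real.tanh (β * ∑ ν : Fin M, (if s ν then (1:ℝ) else -1) * p ν)) :
    p = 0 :=
  selfconsistency_only_zero_highT_general M β hβ1 p hp
end

section
/- Let Z be a random variable taking values in a finite set with a distribution symmetric under Z → −Z (more precisely, let Z = Σ_{k} p_k s_k with s_k i.i.d. uniform in {-1,1} and p_k ∈ ℝ fixed). Then for every A ∈ ℝ, B ≥ 0 and x ≥ 0, A·E[tanh(Bx + Z)] ≤ A·tanh(Bx) ≤ A·B·x whenever A ≥ 0. -/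
/-!
Pairing each sign pattern `s` with its negation `-s` turns `E[tanh(a + Z)]` into the average of
`(tanh(a + Z) + tanh(a - Z)) / 2`, so it suffices that `tanh(a + z) + tanh(a - z) ≤ 2 tanh a` for
`a ≥ 0`. Both sides have numerator `sinh 2a`: the left one over `cosh(a + z) cosh(a - z)`, which
equals `cosh² a + sinh² z`, the right one over the smaller `cosh² a`.
-/

open Finset Real

namespace Real

theorem sinh_le_mul_cosh {t : ℝ} (ht : 0 ≤ t) : sinh t ≤ t * cosh t := by
  have hderiv (y : ℝ) :
      HasDerivAt (fun y => y * cosh y - sinh y) (1 * cosh y + y * sinh y - cosh y) y :=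
    ((hasDerivAt_id' y).mul (hasDerivAt_cosh y)).sub (hasDerivAt_sinh y)
  have hmono : Monotone fun y => y * cosh y - sinh y := by
    refine monotone_of_hasDerivAt_nonneg hderiv fun y => ?_
    have : 0 ≤ y * sinh y := by
      rcases le_total 0 y with hy | hy
      · exact mul_nonneg hy (sinh_nonneg_iff.mpr hy)
      · exact mul_nonneg_of_nonpos_of_nonpos hy (sinh_nonpos_iff.mpr hy)
    simpa using this
  simpa using hmono ht

theorem tanh_le_self {t : ℝ} (ht : 0 ≤ t) : tanh t ≤ t := by
  rw [tanh_eq_sinh_div_cosh, div_le_iff₀ (cosh_pos t)]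
  exact sinh_le_mul_cosh ht

theorem cosh_add_mul_cosh_sub (a z : ℝ) :
    cosh (a + z) * cosh (a - z) = cosh a ^ 2 + sinh z ^ 2 := by
  rw [cosh_add, cosh_sub]
  linear_combination cosh a ^ 2 * cosh_sq_sub_sinh_sq z + sinh z ^ 2 * cosh_sq_sub_sinh_sq a

theorem tanh_add_add_tanh_sub (a z : ℝ) :
    tanh (a + z) + tanh (a - z) = sinh (2 * a) / (cosh (a + z) * cosh (a - z)) := by
  have hsum : sinh (a + z) * cosh (a - z) + cosh (a + z) * sinh (a - z) = sinh (2 * a) := by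
    rw [← sinh_add]; ring_nf
  rw [tanh_eq_sinh_div_cosh, tanh_eq_sinh_div_cosh,
    div_add_div _ _ (cosh_pos _).ne' (cosh_pos _).ne', hsum]

theorem tanh_add_add_tanh_sub_le {a : ℝ} (ha : 0 ≤ a) (z : ℝ) :
    tanh (a + z) + tanh (a - z) ≤ 2 * tanh a := by
  have htwo : 2 * tanh a = sinh (2 * a) / cosh a ^ 2 := by
    rw [tanh_eq_sinh_div_cosh, sinh_two_mul]
    field_simp [(cosh_pos a).ne']
  rw [tanh_add_add_tanh_sub, htwo, cosh_add_mul_cosh_sub]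
  exact div_le_div_of_nonneg_left (sinh_nonneg_iff.mpr (by linarith))
    (pow_pos (cosh_pos a) 2) (le_add_of_nonneg_right (sq_nonneg _))

end Real

theorem sum_comp_le_card_mul_of_involutive_neg {ι : Type*} [Fintype ι] {e : ι → ι}
    (he : Function.Involutive e) {Z : ι → ℝ} (hZ : ∀ s, Z (e s) = -Z s) {g : ℝ → ℝ} {c : ℝ}
    (hg : ∀ z, g z + g (-z) ≤ 2 * c) :
    ∑ s, g (Z s) ≤ Fintype.card ι * c := by
  have hpair : 2 * ∑ s, g (Z s) = ∑ s, (g (Z s) + g (-Z s)) := by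
    rw [two_mul, sum_add_distrib]
    congr 1
    simp_rw [← hZ]
    exact (Fintype.sum_bijective e he.bijective _ _ fun _ => rfl).symm
  have hle : ∑ s, (g (Z s) + g (-Z s)) ≤ ∑ _s : ι, 2 * c := sum_le_sum fun s _ => hg (Z s)
  rw [sum_const, card_univ, nsmul_eq_mul] at hle
  linarith

theorem sum_mul_sign_not {ι : Type*} [Fintype ι] (p : ι → ℝ) (s : ι → Bool) :
    ∑ k, p k * (if !s k then (1 : ℝ) else -1) = -∑ k, p k * (if s k then (1 : ℝ) else -1) := by
  rw [← sum_neg_distrib]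
  refine sum_congr rfl fun k _ => ?_
  cases s k <;> simp

/-- For a symmetric random variable `Z = Σ_k p_k s_k` with i.i.d. uniform signs `s`,
`A ≥ 0`, `B ≥ 0`, `x ≥ 0`:  `A·E[tanh(Bx + Z)] ≤ A·tanh(Bx) ≤ A·B·x`. -/
theorem tanh_symmetric_noise_bound
    (K : ℕ) (p : Fin K → ℝ) (A B x : ℝ) (hA : 0 ≤ A) (hB : 0 ≤ B) (hx : 0 ≤ x) :
    A * ((1 / (2:ℝ) ^ K) * ∑ s : Fin K → Bool,
        Real.tanh (B * x + ∑ k : Fin K, p k * (if s k then (1:ℝ) else -1)))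
      ≤ A * Real.tanh (B * x)
    ∧ A * Real.tanh (B * x) ≤ A * B * x := by
  have ha : 0 ≤ B * x := mul_nonneg hB hx
  have hflip : Function.Involutive fun (s : Fin K → Bool) k => !s k :=
    fun s => funext fun k => Bool.not_not (s k)
  have hsum := sum_comp_le_card_mul_of_involutive_neg
    (Z := fun s => ∑ k, p k * if s k then (1 : ℝ) else -1)
    (g := fun z => tanh (B * x + z)) (c := tanh (B * x)) hflip (sum_mul_sign_not p)
    fun z => by simpa [← sub_eq_add_neg] using tanh_add_add_tanh_sub_le ha z
  simp only [Fintype.card_fun, Fintype.card_bool, Fintype.card_fin, Nat.cast_pow,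
    Nat.cast_ofNat] at hsum
  constructor
  · refine mul_le_mul_of_nonneg_left ?_ hA
    rwa [one_div, inv_mul_le_iff₀ (by positivity)]
  · rw [mul_assoc]
    exact mul_le_mul_of_nonneg_left (tanh_le_self ha) hA
end

section
/- Let β > 1 and let m₀ = m₀(β) > 0 be the largest solution of m₀ = tanh(β m₀). Then β(1 − m₀²) < 1. -/
/-! Write `y = β m₀`, so that `m₀ = tanh y` and `β = y / tanh y`. Then
`β (1 - m₀²) = y / (sinh y cosh y) = 2y / sinh 2y`, which is `< 1` because `sinh t > t` for `t > 0`. -/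

namespace Real

theorem one_sub_tanh_sq (x : ℝ) : 1 - tanh x ^ 2 = (cosh x ^ 2)⁻¹ := by
  rw [tanh_eq_sinh_div_cosh, div_pow, cosh_sq x]
  field_simp
  ring

theorem lt_sinh_mul_cosh {y : ℝ} (hy : 0 < y) : y < sinh y * cosh y := by
  have h : 2 * y < sinh (2 * y) := self_lt_sinh_iff.mpr (by positivity)
  rw [sinh_two_mul] at h
  linarith

theorem mul_one_sub_tanh_sq_lt_tanh {y : ℝ} (hy : 0 < y) : y * (1 - tanh y ^ 2) < tanh y := by
  have hcosh : 0 < cosh y := cosh_pos y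
  rw [one_sub_tanh_sq, tanh_eq_sinh_div_cosh, ← div_eq_mul_inv,
    div_lt_div_iff₀ (by positivity) hcosh]
  calc y * cosh y < sinh y * cosh y * cosh y := by gcongr; exact lt_sinh_mul_cosh hy
    _ = sinh y * cosh y ^ 2 := by ring

end Real

theorem curieWeiss_slope_lt_one_general
    (β m₀ : ℝ) (hβ : 1 < β) (hm₀ : 0 < m₀)
    (hfix : m₀ = Real.tanh (β * m₀)) :
    β * (1 - m₀ ^ 2) < 1 := by
  have hy : 0 < β * m₀ := mul_pos (by linarith) hm₀
  have h := Real.mul_one_sub_tanh_sq_lt_tanh hy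
  rw [← hfix] at h
  refine (mul_lt_mul_iff_of_pos_right hm₀).mp ?_
  linarith

/-- At the positive fixed point `m₀ = tanh(β m₀)` of the Curie–Weiss equation
(β > 1), the slope satisfies `β(1 − m₀²) < 1`. -/
theorem curieWeiss_slope_lt_one
    (β m₀ : ℝ) (hβ : 1 < β) (hm₀ : 0 < m₀)
    (hfix : m₀ = Real.tanh (β * m₀))
    (hmax : ∀ m : ℝ, m = Real.tanh (β * m) → m ≤ m₀) :
    β * (1 - m₀ ^ 2) < 1 :=
  curieWeiss_slope_lt_one_general β m₀ hβ hm₀ hfix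
end

section
/- Let M ≥ 1, β > 0, and let s ∈ {-1,1}^M be a random vector with i.i.d. entries each having mean m₀ ∈ [0,1), where the law of each entry is P(s_μ = ±1) = (1 ± m₀)/2. If p ∈ ℝ^M satisfies p_μ = E_s[ s_μ tanh(β s·p) ] for all μ, and β(1 − m₀²) < 1, then all components of p are equal: p_μ = p_ν for all μ, ν. -/
/-!
Subtracting the equations for `p μ` and `p ν` gives
`p μ - p ν = E[(s_μ - s_ν) tanh(β s·p)]`. The law of `s` is invariant under exchanging the
coordinates `μ` and `ν`, and this exchange changes `s·p` by `-(s_μ - s_ν)(p μ - p ν)`.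
Averaging the expectation with its image under the exchange and using that `tanh` is
`1`-Lipschitz gives `|p μ - p ν| ≤ (β / 2) |p μ - p ν| E[(s_μ - s_ν)²] = β (1 - m₀²) |p μ - p ν|`,
so `p μ = p ν` as soon as `β (1 - m₀²) < 1`.
-/

open Finset Real

namespace Real

theorem hasDerivAt_tanh (x : ℝ) : HasDerivAt tanh (1 - tanh x ^ 2) x := by
  have hcosh : cosh x ≠ 0 := (cosh_pos x).ne'
  have h := (hasDerivAt_sinh x).div (hasDerivAt_cosh x) hcosh
  rw [show sinh / cosh = tanh from funext fun y => (tanh_eq_sinh_div_cosh y).symm] at h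
  refine h.congr_deriv ?_
  rw [tanh_eq_sinh_div_cosh]
  field_simp

theorem differentiable_tanh : Differentiable ℝ tanh :=
  fun x => (hasDerivAt_tanh x).differentiableAt

theorem lipschitzWith_tanh : LipschitzWith 1 tanh := by
  refine lipschitzWith_of_nnnorm_deriv_le differentiable_tanh fun x => ?_
  rw [(hasDerivAt_tanh x).deriv, ← NNReal.coe_le_coe, coe_nnnorm, norm_eq_abs, NNReal.coe_one,
    abs_of_nonneg (sub_nonneg.mpr (tanh_sq_lt_one x).le)]
  linarith [sq_nonneg (tanh x)]

theorem abs_tanh_sub_tanh_le (x y : ℝ) : |tanh x - tanh y| ≤ |x - y| := by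
  simpa [dist_eq] using lipschitzWith_tanh.dist_le_mul x y

end Real

theorem abs_mul_tanh_sub_tanh_le {β : ℝ} (hβ : 0 ≤ β) (a x y : ℝ) :
    |a * (tanh (β * x) - tanh (β * (x - a * y)))| ≤ β * |y| * a ^ 2 :=
  calc |a * (tanh (β * x) - tanh (β * (x - a * y)))|
      ≤ |a| * |β * x - β * (x - a * y)| := by
        rw [abs_mul]; exact mul_le_mul_of_nonneg_left (abs_tanh_sub_tanh_le _ _) (abs_nonneg a)
    _ = β * |y| * a ^ 2 := by
        rw [show β * x - β * (x - a * y) = β * a * y by ring, abs_mul, abs_mul, abs_of_nonneg hβ,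
          ← sq_abs a]
        ring

noncomputable def spin (b : Bool) : ℝ := if b then 1 else -1

@[simp] theorem spin_true : spin true = 1 := if_pos rfl

@[simp] theorem spin_false : spin false = -1 := if_neg Bool.false_ne_true

section Spins

variable {ι : Type*} [Fintype ι]

/-- The law of i.i.d. spins with `P(spin = ±1) = (1 ± m) / 2`. -/
noncomputable def biasedWeight (m : ℝ) (s : ι → Bool) : ℝ := ∏ i, (1 + spin (s i) * m) / 2

noncomputable def spinField (p : ι → ℝ) (s : ι → Bool) : ℝ := ∑ i, spin (s i) * p i

theorem biasedWeight_nonneg {m : ℝ} (h₁ : -1 ≤ m) (h₂ : m ≤ 1) (s : ι → Bool) :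
    0 ≤ biasedWeight m s :=
  prod_nonneg fun i _ => by cases s i <;> simp only [spin_true, spin_false] <;> linarith

theorem biasedWeight_comp_perm (m : ℝ) (s : ι → Bool) (σ : Equiv.Perm ι) :
    biasedWeight m (s ∘ σ) = biasedWeight m s :=
  Equiv.prod_comp σ fun i => (1 + spin (s i) * m) / 2

variable [DecidableEq ι]

theorem sum_biasedWeight_mul_prod (m : ℝ) (f : ι → Bool → ℝ) :
    ∑ s : ι → Bool, biasedWeight m s * ∏ i, f i (s i) =
      ∏ i, ∑ b, (1 + spin b * m) / 2 * f i b := by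
  simp only [Fintype.prod_sum, biasedWeight, prod_mul_distrib]

theorem sum_biasedWeight (m : ℝ) : ∑ s : ι → Bool, biasedWeight m s = 1 := by
  have h := sum_biasedWeight_mul_prod (ι := ι) m fun _ _ => 1
  simp only [prod_const_one, mul_one, Fintype.sum_bool, spin_true, spin_false] at h
  rw [h]
  exact prod_eq_one fun _ _ => by ring

theorem sum_biasedWeight_mul_spin_mul_spin (m : ℝ) {μ ν : ι} (hμν : μ ≠ ν) :
    ∑ s : ι → Bool, biasedWeight m s * (spin (s μ) * spin (s ν)) = m ^ 2 := by
  have hprod := sum_biasedWeight_mul_prod m fun i b => if i ∈ ({μ, ν} : Finset ι) then spin b else 1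
  have hpair (g : ι → ℝ) : ∏ i, (if i ∈ ({μ, ν} : Finset ι) then g i else 1) = g μ * g ν := by
    rw [prod_ite_mem, univ_inter, prod_pair hμν]
  simp only [hpair] at hprod
  rw [hprod, sq, ← hpair fun _ => m]
  refine prod_congr rfl fun i _ => ?_
  split_ifs <;> simp only [Fintype.sum_bool, spin_true, spin_false] <;> ring

theorem sum_biasedWeight_mul_sq_spin_sub_spin (m : ℝ) {μ ν : ι} (hμν : μ ≠ ν) :
    ∑ s : ι → Bool, biasedWeight m s * (spin (s μ) - spin (s ν)) ^ 2 = 2 * (1 - m ^ 2) := by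
  have hsq (a b : Bool) : (spin a - spin b) ^ 2 = 2 - 2 * (spin a * spin b) := by
    cases a <;> cases b <;> norm_num
  calc ∑ s : ι → Bool, biasedWeight m s * (spin (s μ) - spin (s ν)) ^ 2
      = ∑ s : ι → Bool, (2 * biasedWeight m s - 2 * (biasedWeight m s * (spin (s μ) * spin (s ν)))) :=
        sum_congr rfl fun s _ => by rw [hsq]; ring
    _ = 2 * (1 - m ^ 2) := by
        rw [sum_sub_distrib, ← mul_sum, ← mul_sum, sum_biasedWeight,
          sum_biasedWeight_mul_spin_mul_spin m hμν]
        ring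

theorem spinField_comp_swap (p : ι → ℝ) (s : ι → Bool) (μ ν : ι) :
    spinField p (s ∘ Equiv.swap μ ν) =
      spinField p s - (spin (s μ) - spin (s ν)) * (p μ - p ν) := by
  have hswap_apply (i : ι) : spin (s i) * p (Equiv.swap μ ν i) = spin (s i) * p i -
      (p μ - p ν) * ((if μ = i then spin (s i) else 0) - if ν = i then spin (s i) else 0) := by
    rcases eq_or_ne i μ with rfl | hμ
    · simp only [Equiv.swap_apply_left, if_true]
      split_ifs <;> subst_vars <;> ring
    rcases eq_or_ne i ν with rfl | hν
    · simp only [Equiv.swap_apply_right, hμ.symm, if_true, if_false]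
      ring
    · simp only [Equiv.swap_apply_of_ne_of_ne hμ hν, hμ.symm, hν.symm, if_false]
      ring
  rw [spinField, ← Equiv.sum_comp (Equiv.swap μ ν)]
  simp only [Function.comp_apply, Equiv.swap_apply_self, hswap_apply, sum_sub_distrib, ← mul_sum,
    sum_ite_eq, mem_univ, if_true, spinField]
  ring


theorem two_mul_abs_sum_mul_tanh_spinField_le {w : (ι → Bool) → ℝ} (hw : ∀ s, 0 ≤ w s)
    {μ ν : ι} (hswap : ∀ s, w (s ∘ Equiv.swap μ ν) = w s) {β : ℝ} (hβ : 0 ≤ β) (p : ι → ℝ) :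
    2 * |∑ s, w s * ((spin (s μ) - spin (s ν)) * tanh (β * spinField p s))| ≤
      β * |p μ - p ν| * ∑ s, w s * (spin (s μ) - spin (s ν)) ^ 2 := by
  set f : (ι → Bool) → ℝ := fun s => w s * ((spin (s μ) - spin (s ν)) * tanh (β * spinField p s))
  let T : Equiv.Perm (ι → Bool) :=
    Function.Involutive.toPerm (· ∘ Equiv.swap μ ν) fun s => by ext; simp
  have hpair (s : ι → Bool) : f s + f (T s) = w s * ((spin (s μ) - spin (s ν)) *
      (tanh (β * spinField p s) -
        tanh (β * (spinField p s - (spin (s μ) - spin (s ν)) * (p μ - p ν))))) := by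
    have hT : T s = s ∘ Equiv.swap μ ν := rfl
    simp only [f, hT, hswap, spinField_comp_swap, Function.comp_apply, Equiv.swap_apply_left,
      Equiv.swap_apply_right]
    ring
  calc 2 * |∑ s, f s| = |∑ s, (f s + f (T s))| := by
        rw [sum_add_distrib, Equiv.sum_comp T f, ← two_mul, abs_mul, abs_two]
    _ ≤ ∑ s, |f s + f (T s)| := abs_sum_le_sum_abs _ _
    _ ≤ ∑ s, w s * (β * |p μ - p ν| * (spin (s μ) - spin (s ν)) ^ 2) := by
        refine sum_le_sum fun s _ => ?_
        rw [hpair, abs_mul, abs_of_nonneg (hw s)]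
        exact mul_le_mul_of_nonneg_left (abs_mul_tanh_sub_tanh_le hβ _ _ _) (hw s)
    _ = β * |p μ - p ν| * ∑ s, w s * (spin (s μ) - spin (s ν)) ^ 2 := by
        rw [mul_sum]
        exact sum_congr rfl fun s _ => by ring

end Spins

theorem selfconsistency_solutions_homogeneous_general
    (M : ℕ) (β m₀ : ℝ) (hβ : 0 < β)
    (hm₀0 : 0 ≤ m₀) (hm₀1 : m₀ < 1)
    (hslope : β * (1 - m₀ ^ 2) < 1)
    (p : Fin M → ℝ)
    (hp : ∀ μ : Fin M,
      p μ = ∑ s : Fin M → Bool,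
        (∏ ν : Fin M, ((1 + (if s ν then (1:ℝ) else -1) * m₀) / 2)) *
          ((if s μ then (1:ℝ) else -1) *
            Real.tanh (β * ∑ ν : Fin M, (if s ν then (1:ℝ) else -1) * p ν))) :
    ∀ μ ν : Fin M, p μ = p ν := by
  intro μ ν
  rcases eq_or_ne μ ν with rfl | hμν
  · rfl
  have hself (μ : Fin M) : p μ = ∑ s : Fin M → Bool,
      biasedWeight m₀ s * (spin (s μ) * tanh (β * spinField p s)) := hp μ
  have hdiff : p μ - p ν = ∑ s : Fin M → Bool,
      biasedWeight m₀ s * ((spin (s μ) - spin (s ν)) * tanh (β * spinField p s)) := by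
    rw [hself μ, hself ν, ← sum_sub_distrib]
    exact sum_congr rfl fun s _ => by ring
  have hbound := two_mul_abs_sum_mul_tanh_spinField_le (μ := μ) (ν := ν)
    (biasedWeight_nonneg (by linarith) hm₀1.le) (fun s => biasedWeight_comp_perm m₀ s _) hβ.le p
  rw [← hdiff, sum_biasedWeight_mul_sq_spin_sub_spin m₀ hμν] at hbound
  have habs : |p μ - p ν| = 0 := by nlinarith [abs_nonneg (p μ - p ν)]
  exact sub_eq_zero.mp (abs_eq_zero.mp habs)

/-- Homogeneity of solutions: for biased i.i.d. signs of mean `m₀ ∈ [0,1)` with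
`β(1−m₀²) < 1`, any solution of `p_μ = E_s[s_μ tanh(β s·p)]` has equal components. -/
theorem selfconsistency_solutions_homogeneous
    (M : ℕ) (hM : 1 ≤ M) (β m₀ : ℝ) (hβ : 0 < β)
    (hm₀0 : 0 ≤ m₀) (hm₀1 : m₀ < 1)
    (hslope : β * (1 - m₀ ^ 2) < 1)
    (p : Fin M → ℝ)
    (hp : ∀ μ : Fin M,
      p μ = ∑ s : Fin M → Bool,
        (∏ ν : Fin M, ((1 + (if s ν then (1:ℝ) else -1) * m₀) / 2)) *
          ((if s μ then (1:ℝ) else -1) *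
            Real.tanh (β * ∑ ν : Fin M, (if s ν then (1:ℝ) else -1) * p ν))) :
    ∀ μ ν : Fin M, p μ = p ν :=
  selfconsistency_solutions_homogeneous_general M β m₀ hβ hm₀0 hm₀1 hslope p hp
end

section
/- Let β > 1, m₀ = m₀(β) the positive solution of m₀ = tanh(β m₀), and M ≥ 1. Then the homogeneous vector p with p_μ = m₀ for all μ solves the self-consistency equation p_μ = Z⁻¹ Σ_{s∈{-1,1}^M} s_μ exp(β m₀ Σ_ν s_ν) tanh(β Σ_ν s_ν p_ν), where Z = (2cosh(β m₀))^M. -/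
open Finset Real

lemma sign_not (b : Bool) : (if (!b) then (1:ℝ) else -1) = -(if b then 1 else -1) := by
  cases b <;> simp

lemma sum_sign_exp (M : ℕ) (μ : Fin M) (c : ℝ) :
    ∑ s : Fin M → Bool, (if s μ then (1:ℝ) else -1) *
      Real.exp (c * ∑ ν, (if s ν then (1:ℝ) else -1)) =
    2 * Real.sinh c * (2 * Real.cosh c) ^ (M - 1) := by
  set g : Fin M → Bool → ℝ := fun ν b =>
    (if ν = μ then (if b then (1:ℝ) else -1) else 1) *
      Real.exp (c * (if b then (1:ℝ) else -1)) with hg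
  have key : ∀ s : Fin M → Bool,
      (if s μ then (1:ℝ) else -1) * Real.exp (c * ∑ ν, (if s ν then (1:ℝ) else -1))
      = ∏ ν, g ν (s ν) := by
    intro s
    simp only [hg]
    rw [Finset.prod_mul_distrib, Finset.prod_ite_eq' Finset.univ μ
      (fun ν => if s ν then (1:ℝ) else -1), Finset.mul_sum, Real.exp_sum]
    simp
  rw [Finset.sum_congr rfl (fun s _ => key s), ← Fintype.prod_sum g]
  have hval : ∀ ν : Fin M, (∑ b : Bool, g ν b)
      = if ν = μ then 2 * Real.sinh c else 2 * Real.cosh c := by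
    intro ν
    by_cases h : ν = μ <;>
      simp [hg, h, Fintype.sum_bool, Real.sinh_eq, Real.cosh_eq] <;> ring_nf
  rw [Finset.prod_congr rfl (fun ν _ => hval ν)]
  rw [← Finset.mul_prod_erase Finset.univ _ (Finset.mem_univ μ)]
  rw [if_pos rfl, Finset.prod_ite_of_false]
  · rw [Finset.prod_const, Finset.card_erase_of_mem (Finset.mem_univ μ), Finset.card_univ,
      Fintype.card_fin]
  · intro ν hν
    exact Finset.ne_of_mem_erase hν

/-- For β > 1 and m₀ the positive solution of m₀ = tanh(β m₀), the homogeneous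
vector `p = m₀·(1,…,1)` solves the self-consistency equation of the dual model. -/
theorem homogeneous_solution_selfconsistency
    (M : ℕ) (hM : 1 ≤ M) (β m₀ : ℝ) (hβ : 1 < β) (hm₀ : 0 < m₀)
    (hfix : m₀ = Real.tanh (β * m₀)) :
    ∀ μ : Fin M,
      m₀ = (1 / (2 * Real.cosh (β * m₀)) ^ M) *
        ∑ s : Fin M → Bool,
          (if s μ then (1:ℝ) else -1) *
            Real.exp (β * m₀ * ∑ ν : Fin M, (if s ν then (1:ℝ) else -1)) *
            Real.tanh (β * ∑ ν : Fin M, (if s ν then (1:ℝ) else -1) * m₀) := by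
  intro μ
  set c := β * m₀ with hc
  set S : (Fin M → Bool) → ℝ := fun s => ∑ ν, (if s ν then (1:ℝ) else -1) with hS
  set σ : (Fin M → Bool) → ℝ := fun s => if s μ then (1:ℝ) else -1 with hσ
  have harg : ∀ s : Fin M → Bool, β * ∑ ν : Fin M, (if s ν then (1:ℝ) else -1) * m₀ = c * S s := by
    intro s
    rw [hS, ← Finset.sum_mul]
    ring
  have hsummand : ∀ s : Fin M → Bool,
      (if s μ then (1:ℝ) else -1) *
        Real.exp (β * m₀ * ∑ ν : Fin M, (if s ν then (1:ℝ) else -1)) *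
        Real.tanh (β * ∑ ν : Fin M, (if s ν then (1:ℝ) else -1) * m₀)
      = σ s * Real.exp (c * S s) * Real.tanh (c * S s) := by
    intro s; rw [harg]
  rw [Finset.sum_congr rfl (fun s _ => hsummand s)]
  have hnegσ : ∀ s : Fin M → Bool, σ (fun ν => !(s ν)) = -σ s := by
    intro s
    simp only [hσ]
    exact sign_not (s μ)
  have hnegS : ∀ s : Fin M → Bool, S (fun ν => !(s ν)) = -S s := by
    intro s
    simp only [hS, ← Finset.sum_neg_distrib]
    refine Finset.sum_congr rfl (fun ν _ => ?_)
    exact sign_not (s ν)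
  have hbij : Function.Bijective (fun s : Fin M → Bool => fun ν => !(s ν)) := by
    have : Function.Involutive (fun s : Fin M → Bool => fun ν => !(s ν)) := by
      intro s; funext ν; simp
    exact this.bijective
  have hsym : (∑ s : Fin M → Bool, σ s * Real.exp (c * S s) * Real.tanh (c * S s))
      = ∑ s : Fin M → Bool, σ s * Real.exp (-(c * S s)) * Real.tanh (c * S s) :=
    Fintype.sum_bijective _ hbij
      (fun s => σ s * Real.exp (c * S s) * Real.tanh (c * S s))
      (fun s => σ s * Real.exp (-(c * S s)) * Real.tanh (c * S s))
      (fun s => by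
        simp only [hnegσ, hnegS, mul_neg, neg_neg, Real.tanh_neg]
        ring)
  have hT : (∑ s : Fin M → Bool, σ s * Real.exp (c * S s) * Real.tanh (c * S s))
      = 2 * Real.sinh c * (2 * Real.cosh c) ^ (M - 1) := by
    have h2 : (2:ℝ) * ∑ s : Fin M → Bool, σ s * Real.exp (c * S s) * Real.tanh (c * S s)
        = ∑ s : Fin M → Bool, σ s * (Real.exp (c * S s) - Real.exp (-(c * S s))) := by
      rw [two_mul]
      nth_rewrite 2 [hsym]
      rw [← Finset.sum_add_distrib]
      refine Finset.sum_congr rfl (fun s _ => ?_)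
      have hne : Real.exp (c * S s) + Real.exp (-(c * S s)) ≠ 0 := by positivity
      rw [Real.tanh_eq_sinh_div_cosh, Real.sinh_eq, Real.cosh_eq]
      field_simp
    have hA : ∑ s : Fin M → Bool, σ s * (Real.exp (c * S s) - Real.exp (-(c * S s)))
        = 2 * (2 * Real.sinh c * (2 * Real.cosh c) ^ (M - 1)) := by
      have e1 := sum_sign_exp M μ c
      have e2 := sum_sign_exp M μ (-c)
      simp only [neg_mul, Real.sinh_neg, Real.cosh_neg] at e2
      have split : ∑ s : Fin M → Bool, σ s * (Real.exp (c * S s) - Real.exp (-(c * S s)))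
          = (∑ s : Fin M → Bool, σ s * Real.exp (c * S s))
            - ∑ s : Fin M → Bool, σ s * Real.exp (-(c * S s)) := by
        rw [← Finset.sum_sub_distrib]
        exact Finset.sum_congr rfl (fun s _ => by ring)
      rw [split, e1, e2]
      ring
    linarith
  rw [hT]
  have hcosh : (0:ℝ) < Real.cosh c := Real.cosh_pos c
  have hpow : (2 * Real.cosh c) ^ M = (2 * Real.cosh c) * (2 * Real.cosh c) ^ (M - 1) := by
    conv_lhs => rw [← Nat.sub_add_cancel hM]
    rw [pow_succ]
    ring
  rw [hpow, hfix, Real.tanh_eq_sinh_div_cosh]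
  have hpne : (2 * Real.cosh c) ^ (M - 1) ≠ 0 := by positivity
  field_simp
end

section
/- For M ≥ 1 and every real a, (2cosh(a))^{-M} Σ_{s∈{-1,1}^M} s_1 sinh(a Σ_{μ=1}^M s_μ) = tanh(a). -/
open Finset Real

lemma cosh_sum_aux (a : ℝ) : ∀ n : ℕ,
    (∑ t : Fin n → Bool, Real.cosh (a * ∑ μ : Fin n, (if t μ then (1:ℝ) else -1)))
      = (2 * Real.cosh a) ^ n := by
  intro n
  induction n with
  | zero => simp
  | succ n ih =>
    rw [← (Fin.consEquiv fun _ : Fin (n+1) => Bool).sum_comp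
      (fun s => Real.cosh (a * ∑ μ : Fin (n+1), (if s μ then (1:ℝ) else -1)))]
    rw [Fintype.sum_prod_type]
    simp only [Fin.consEquiv_apply, Fin.sum_univ_succ, Fin.cons_zero, Fin.cons_succ]
    rw [Fintype.sum_bool]
    simp only [Bool.false_eq_true, if_true, if_false]
    have key : ∀ S : ℝ, Real.cosh (a * (1 + S)) + Real.cosh (a * (-1 + S))
        = 2 * Real.cosh a * Real.cosh (a * S) := by
      intro S
      have h1 : a * (1 + S) = a + a * S := by ring
      have h2 : a * (-1 + S) = a * S - a := by ring
      rw [h1, h2, Real.cosh_add, Real.cosh_sub]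
      ring
    rw [← Finset.sum_add_distrib]
    simp only [key]
    rw [← Finset.mul_sum, ih]
    ring

lemma sinh_sum_aux (a : ℝ) (n : ℕ) :
    (∑ s : Fin (n+1) → Bool,
        (if s 0 then (1:ℝ) else -1) *
          Real.sinh (a * ∑ μ : Fin (n+1), (if s μ then (1:ℝ) else -1)))
      = 2 * Real.sinh a * (2 * Real.cosh a) ^ n := by
  rw [← (Fin.consEquiv fun _ : Fin (n+1) => Bool).sum_comp
    (fun s => (if s 0 then (1:ℝ) else -1) *
      Real.sinh (a * ∑ μ : Fin (n+1), (if s μ then (1:ℝ) else -1)))]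
  rw [Fintype.sum_prod_type]
  simp only [Fin.consEquiv_apply, Fin.sum_univ_succ, Fin.cons_zero, Fin.cons_succ]
  rw [Fintype.sum_bool]
  simp only [Bool.false_eq_true, if_true, if_false]
  have key : ∀ S : ℝ, 1 * Real.sinh (a * (1 + S)) + (-1) * Real.sinh (a * (-1 + S))
      = 2 * Real.sinh a * Real.cosh (a * S) := by
    intro S
    have h1 : a * (1 + S) = a + a * S := by ring
    have h2 : a * (-1 + S) = a * S - a := by ring
    rw [h1, h2, Real.sinh_add, Real.sinh_sub]
    ring
  rw [← Finset.sum_add_distrib]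
  simp only [key]
  rw [← Finset.mul_sum, cosh_sum_aux]

/-- For every `a : ℝ` and `M ≥ 1`:
`(2cosh a)^{-M} Σ_{s∈{-1,1}^M} s_1 sinh(a Σ_μ s_μ) = tanh a`. -/
theorem sinh_sum_identity
    (M : ℕ) (hM : 0 < M) (a : ℝ) :
    (∑ s : Fin M → Bool,
        (if s ⟨0, hM⟩ then (1:ℝ) else -1) *
          Real.sinh (a * ∑ μ : Fin M, (if s μ then (1:ℝ) else -1)))
      / (2 * Real.cosh a) ^ M = Real.tanh a := by
  obtain ⟨n, rfl⟩ := Nat.exists_eq_succ_of_ne_zero hM.ne'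
  have h0 : (⟨0, hM⟩ : Fin (n+1)) = 0 := rfl
  rw [h0, sinh_sum_aux]
  have hc : Real.cosh a > 0 := Real.cosh_pos a
  rw [Real.tanh_eq_sinh_div_cosh]
  field_simp [pow_succ]
  simp only [Nat.succ_eq_add_one]
  ring
end

section
/- Let M ≥ 1, β > 0, β̂ > 0, m₀ = m₀(β̂) ∈ [0,1], and s ∈ {-1,1}^M a random vector with i.i.d. entries of mean m₀. If β(1 + (M−1)m₀²) < 1, then the only solution p ∈ ℝ^M of the equations p_μ = E_s[s_μ tanh(β s·p)] (for all μ) is p = 0. -/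
/-!
Pairing the fixed-point equation with `p` gives `|p|² = E[(p·s) tanh(β p·s)]`, and
`|tanh z| ≤ |z|` bounds this by `β E[(p·s)²]`. For i.i.d. signs of mean `m₀` that second moment
is `(1 - m₀²)|p|² + m₀² (∑ p_μ)²`, at most `(1 + (M - 1) m₀²)|p|²` by Cauchy–Schwarz. Hence
`|p|² ≤ c |p|²` with `c < 1`, so `p = 0`.
-/

open Finset Real

theorem Real.sinh_le_mul_cosh_s9 {x : ℝ} (hx : 0 ≤ x) : sinh x ≤ x * cosh x := by
  let f : ℝ → ℝ := fun y => y * cosh y - sinh y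
  have hf : ∀ y, HasDerivAt f (y * sinh y) y := fun y =>
    (((hasDerivAt_id' y).fun_mul (hasDerivAt_cosh y)).fun_sub (hasDerivAt_sinh y)).congr_deriv
      (by ring)
  have hmono : MonotoneOn f (Set.Ici 0) :=
    monotoneOn_of_hasDerivWithinAt_nonneg (convex_Ici 0)
      (fun y _ => (hf y).continuousAt.continuousWithinAt)
      (fun y _ => (hf y).hasDerivWithinAt)
      (fun y hy => by
        rw [interior_Ici] at hy
        exact mul_nonneg hy.le (sinh_nonneg_iff.2 hy.le))
  simpa [f] using hmono Set.self_mem_Ici hx hx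

theorem Real.tanh_le_self_s9 {x : ℝ} (hx : 0 ≤ x) : tanh x ≤ x := by
  rw [tanh_eq_sinh_div_cosh, div_le_iff₀ (cosh_pos x)]
  exact sinh_le_mul_cosh_s9 hx

theorem Real.abs_tanh_le_abs (x : ℝ) : |tanh x| ≤ |x| := by
  suffices h : ∀ y, 0 ≤ y → |tanh y| ≤ |y| by
    rcases le_total 0 x with hx | hx
    · exact h x hx
    · simpa [tanh_neg] using h (-x) (neg_nonneg.2 hx)
  intro y hy
  have htanh : 0 ≤ tanh y := by
    rw [tanh_eq_sinh_div_cosh]; exact div_nonneg (sinh_nonneg_iff.2 hy) (cosh_pos y).le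
  rw [abs_of_nonneg hy, abs_of_nonneg htanh]
  exact tanh_le_self_s9 hy

theorem Real.mul_tanh_mul_le {β : ℝ} (hβ : 0 ≤ β) (x : ℝ) : x * tanh (β * x) ≤ β * x ^ 2 :=
  calc x * tanh (β * x) ≤ |x| * |tanh (β * x)| := by rw [← abs_mul]; exact le_abs_self _
    _ ≤ |x| * |β * x| := mul_le_mul_of_nonneg_left (abs_tanh_le_abs _) (abs_nonneg x)
    _ = β * x ^ 2 := by rw [abs_mul, abs_of_nonneg hβ, ← sq_abs x]; ring

namespace SelfConsistency

variable {ι : Type*} [Fintype ι]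

noncomputable section

def spin (b : Bool) : ℝ := if b then 1 else -1

/-- The law of a vector of i.i.d. signs of mean `m`: `spin b` is the sign encoded by `b`. -/
def signWeight (m : ℝ) (s : ι → Bool) : ℝ := ∏ ν, (1 + spin (s ν) * m) / 2

def selfConsistencyMap [DecidableEq ι] (β m : ℝ) (p : ι → ℝ) (μ : ι) : ℝ :=
  ∑ s, signWeight m s * (spin (s μ) * tanh (β * ∑ ν, spin (s ν) * p ν))

@[simp]
lemma spin_true : spin true = 1 := rfl

@[simp]
lemma spin_false : spin false = -1 := rfl

lemma spin_mul_self (b : Bool) : spin b * spin b = 1 := by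
  cases b <;> simp [spin]

lemma signWeight_nonneg {m : ℝ} (hm : |m| ≤ 1) (s : ι → Bool) : 0 ≤ signWeight m s :=
  prod_nonneg fun ν _ => by
    obtain ⟨hm₁, hm₂⟩ := abs_le.1 hm
    cases s ν <;> simp only [spin] <;> norm_num <;> linarith

lemma sum_signWeight_mul_prod [DecidableEq ι] (m : ℝ) (g : ι → Bool → ℝ) :
    ∑ s, signWeight m s * ∏ ν, g ν (s ν) =
      ∏ ν, ((1 + m) / 2 * g ν true + (1 - m) / 2 * g ν false) := by
  have hfactor : ∀ ν, (1 + m) / 2 * g ν true + (1 - m) / 2 * g ν false =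
      ∑ b, (1 + spin b * m) / 2 * g ν b := fun ν => by
    simp only [Fintype.sum_bool, spin_true, spin_false]
    ring
  simp only [hfactor, Fintype.prod_sum, signWeight, prod_mul_distrib]

lemma sum_signWeight [DecidableEq ι] (m : ℝ) : ∑ s : ι → Bool, signWeight m s = 1 := by
  have h := sum_signWeight_mul_prod (ι := ι) m fun _ _ => 1
  simp only [mul_one, prod_const_one] at h
  rw [h]
  exact prod_eq_one fun _ _ => by ring

lemma sum_signWeight_mul_spin_mul_spin [DecidableEq ι] (m : ℝ) (μ ν : ι) :
    ∑ s, signWeight m s * (spin (s μ) * spin (s ν)) = if μ = ν then 1 else m ^ 2 := by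
  rcases eq_or_ne μ ν with rfl | hne
  · simp [spin_mul_self, sum_signWeight]
  · rw [if_neg hne]
    let g : ι → Bool → ℝ := fun ρ b => if ρ = μ ∨ ρ = ν then spin b else 1
    have hprod (s : ι → Bool) : spin (s μ) * spin (s ν) = ∏ ρ, g ρ (s ρ) := by
      rw [Fintype.prod_eq_mul μ ν hne fun ρ hρ => by simp [g, hρ.1, hρ.2]]
      simp [g]
    simp only [hprod, sum_signWeight_mul_prod]
    rw [Fintype.prod_eq_mul μ ν hne fun ρ hρ => by simp [g, hρ.1, hρ.2]; ring]
    simp only [g, true_or, or_true, ↓reduceIte, spin_true, spin_false, mul_one, mul_neg]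
    ring

lemma sum_signWeight_mul_sq [DecidableEq ι] (m : ℝ) (p : ι → ℝ) :
    ∑ s, signWeight m s * (∑ ν, spin (s ν) * p ν) ^ 2 =
      (1 - m ^ 2) * ∑ ν, p ν ^ 2 + m ^ 2 * (∑ ν, p ν) ^ 2 := by
  calc ∑ s, signWeight m s * (∑ ν, spin (s ν) * p ν) ^ 2
      = ∑ s, ∑ μ, ∑ ν, p μ * p ν * (signWeight m s * (spin (s μ) * spin (s ν))) := by
        refine sum_congr rfl fun s _ => ?_
        rw [sq, sum_mul_sum, mul_sum]
        exact sum_congr rfl fun μ _ => by rw [mul_sum]; exact sum_congr rfl fun ν _ => by ring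
    _ = ∑ μ, ∑ ν, p μ * p ν * ∑ s, signWeight m s * (spin (s μ) * spin (s ν)) := by
        rw [sum_comm]
        simp only [mul_sum]
        exact sum_congr rfl fun μ _ => sum_comm
    _ = ∑ μ, ∑ ν, p μ * p ν * (if μ = ν then 1 else m ^ 2) := by
        simp only [sum_signWeight_mul_spin_mul_spin]
    _ = (1 - m ^ 2) * ∑ ν, p ν ^ 2 + m ^ 2 * (∑ ν, p ν) ^ 2 := by
        have hsplit (μ ν : ι) : p μ * p ν * (if μ = ν then 1 else m ^ 2) =
            m ^ 2 * (p μ * p ν) + (1 - m ^ 2) * (if μ = ν then p μ * p ν else 0) := by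
          split_ifs <;> ring
        simp only [hsplit, sum_add_distrib, ← mul_sum, sum_ite_eq, mem_univ, if_true, ← sum_mul,
          ← sq]
        ring

lemma sum_sq_eq_sum_mul_spin_dot [DecidableEq ι] {w f : (ι → Bool) → ℝ} {p : ι → ℝ}
    (hp : ∀ μ, p μ = ∑ s, w s * (spin (s μ) * f s)) :
    ∑ μ, p μ ^ 2 = ∑ s, w s * ((∑ μ, spin (s μ) * p μ) * f s) := by
  calc ∑ μ, p μ ^ 2 = ∑ μ, (∑ s, w s * (spin (s μ) * f s)) * p μ :=
        sum_congr rfl fun μ _ => by rw [sq, ← hp μ]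
    _ = ∑ s, w s * ((∑ μ, spin (s μ) * p μ) * f s) := by
        simp only [sum_mul, mul_sum]
        rw [sum_comm]
        exact sum_congr rfl fun s _ => sum_congr rfl fun μ _ => by ring

theorem sum_sq_le_of_isFixedPt [DecidableEq ι] {β m : ℝ} (hβ : 0 ≤ β) (hm : |m| ≤ 1)
    {p : ι → ℝ} (hp : Function.IsFixedPt (selfConsistencyMap β m) p) :
    ∑ μ, p μ ^ 2 ≤ β * (1 + (Fintype.card ι - 1) * m ^ 2) * ∑ μ, p μ ^ 2 := by
  set D : (ι → Bool) → ℝ := fun s => ∑ ν, spin (s ν) * p ν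
  calc ∑ μ, p μ ^ 2 = ∑ s, signWeight m s * (D s * tanh (β * D s)) :=
        sum_sq_eq_sum_mul_spin_dot fun μ => (congrFun hp μ).symm
    _ ≤ ∑ s, signWeight m s * (β * D s ^ 2) :=
        sum_le_sum fun s _ =>
          mul_le_mul_of_nonneg_left (mul_tanh_mul_le hβ _) (signWeight_nonneg hm s)
    _ = β * ((1 - m ^ 2) * ∑ μ, p μ ^ 2 + m ^ 2 * (∑ μ, p μ) ^ 2) := by
        rw [← sum_signWeight_mul_sq, mul_sum]
        exact sum_congr rfl fun s _ => by ring
    _ ≤ β * ((1 - m ^ 2) * ∑ μ, p μ ^ 2 + m ^ 2 * (Fintype.card ι * ∑ μ, p μ ^ 2)) := by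
        gcongr
        simpa using sq_sum_le_card_mul_sum_sq (s := univ) (f := p)
    _ = β * (1 + (Fintype.card ι - 1) * m ^ 2) * ∑ μ, p μ ^ 2 := by ring

theorem eq_zero_of_isFixedPt [DecidableEq ι] {β m : ℝ} (hβ : 0 ≤ β) (hm : |m| ≤ 1)
    (hcond : β * (1 + (Fintype.card ι - 1) * m ^ 2) < 1) {p : ι → ℝ}
    (hp : Function.IsFixedPt (selfConsistencyMap β m) p) : p = 0 := by
  have hle := sum_sq_le_of_isFixedPt hβ hm hp
  have hnonneg : 0 ≤ ∑ μ, p μ ^ 2 := sum_nonneg fun μ _ => sq_nonneg (p μ)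
  have hzero : ∑ μ, p μ ^ 2 = 0 := by nlinarith
  funext μ
  exact pow_eq_zero_iff two_ne_zero |>.1 <|
    (sum_eq_zero_iff_of_nonneg fun ν _ => sq_nonneg (p ν)).1 hzero μ (mem_univ μ)

end

end SelfConsistency

theorem selfconsistency_only_zero_mismatched_general
    (M : ℕ) (β m₀ : ℝ) (hβ : 0 < β)
    (hm₀0 : 0 ≤ m₀) (hm₀1 : m₀ ≤ 1)
    (hcond : β * (1 + ((M:ℝ) - 1) * m₀ ^ 2) < 1)
    (p : Fin M → ℝ)
    (hp : ∀ μ : Fin M,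
      p μ = ∑ s : Fin M → Bool,
        (∏ ν : Fin M, ((1 + (if s ν then (1:ℝ) else -1) * m₀) / 2)) *
          ((if s μ then (1:ℝ) else -1) *
            Real.tanh (β * ∑ ν : Fin M, (if s ν then (1:ℝ) else -1) * p ν))) :
    p = 0 :=
  SelfConsistency.eq_zero_of_isFixedPt hβ.le (abs_le.2 ⟨by linarith, hm₀1⟩) (by simpa using hcond)
    (funext fun μ => (hp μ).symm : SelfConsistency.selfConsistencyMap β m₀ p = p)

/-- If `β(1+(M−1)m₀²) < 1` then the only solution of
`p_μ = E_s[s_μ tanh(β s·p)]` (i.i.d. signs of mean `m₀`) is `p = 0`. -/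
theorem selfconsistency_only_zero_mismatched
    (M : ℕ) (hM : 1 ≤ M) (β m₀ : ℝ) (hβ : 0 < β)
    (hm₀0 : 0 ≤ m₀) (hm₀1 : m₀ ≤ 1)
    (hcond : β * (1 + ((M:ℝ) - 1) * m₀ ^ 2) < 1)
    (p : Fin M → ℝ)
    (hp : ∀ μ : Fin M,
      p μ = ∑ s : Fin M → Bool,
        (∏ ν : Fin M, ((1 + (if s ν then (1:ℝ) else -1) * m₀) / 2)) *
          ((if s μ then (1:ℝ) else -1) *
            Real.tanh (β * ∑ ν : Fin M, (if s ν then (1:ℝ) else -1) * p ν))) :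
    p = 0 :=
  selfconsistency_only_zero_mismatched_general M β m₀ hβ hm₀0 hm₀1 hcond p hp
end

section
/- Let Z be a standard Gaussian random variable and m̂ ≥ 0, and let X = m̂ + √m̂·Z (so that tanh(X) has a distribution μ on (−1,1)); then E[tanh(m̂ + √m̂ Z)] = E[tanh²(m̂ + √m̂ Z)]. -/
open MeasureTheory ProbabilityTheory
open scoped ENNReal NNReal

lemma my_abs_tanh_le (x : ℝ) : |Real.tanh x| ≤ 1 := by
  have hc := Real.cosh_pos x
  have h1 := Real.cosh_add_sinh x
  have h2 := Real.cosh_sub_sinh x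
  have e1 := Real.exp_pos x
  have e2 := Real.exp_pos (-x)
  rw [Real.tanh_eq_sinh_div_cosh, abs_div, abs_of_pos hc, div_le_one hc]
  rw [abs_le]
  constructor <;> nlinarith

lemma my_continuous_tanh : Continuous Real.tanh := by
  have : Real.tanh = fun x => Real.sinh x / Real.cosh x := funext Real.tanh_eq_sinh_div_cosh
  rw [this]
  exact Real.continuous_sinh.div Real.continuous_cosh fun x => (Real.cosh_pos x).ne'

lemma tanh_flip (x : ℝ) :
    (Real.tanh (-x) - Real.tanh (-x) ^ 2) * Real.exp (-(2*x)) = -(Real.tanh x - Real.tanh x ^ 2) := by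
  rw [Real.tanh_neg, Real.tanh_eq_sinh_div_cosh, Real.sinh_eq, Real.cosh_eq]
  have h1 : Real.exp x ≠ 0 := (Real.exp_pos x).ne'
  have h2 : Real.exp x + Real.exp (-x) ≠ 0 := by positivity
  have h3 : Real.exp (-x) = (Real.exp x)⁻¹ := by rw [Real.exp_neg]
  have h4 : Real.exp (-(2*x)) = (Real.exp x)⁻¹ * (Real.exp x)⁻¹ := by
    rw [← Real.exp_neg, ← Real.exp_add]; ring_nf
  rw [h3] at h2 ⊢
  rw [h4]
  field_simp
  ring

lemma pdf_flip (c z : ℝ) :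
    gaussianPDFReal 0 1 (-z - 2*c) = gaussianPDFReal 0 1 z * Real.exp (-(2*(c*c + c*z))) := by
  simp only [gaussianPDFReal, NNReal.coe_one, mul_one, sub_zero]
  rw [mul_assoc, ← Real.exp_add]
  congr 1
  ring

/-- Nishimori-line Gaussian identity:
`∫ Dz tanh(m̂ + z√m̂) = ∫ Dz tanh²(m̂ + z√m̂)` for `m̂ ≥ 0`. -/
theorem gaussian_tanh_identity (mhat : ℝ) (h : 0 ≤ mhat) :
    ∫ z, Real.tanh (mhat + Real.sqrt mhat * z) ∂(gaussianReal 0 1)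
      = ∫ z, (Real.tanh (mhat + Real.sqrt mhat * z)) ^ 2 ∂(gaussianReal 0 1) := by
  set c := Real.sqrt mhat with hc
  have hcc : c * c = mhat := Real.mul_self_sqrt h
  set γ := gaussianReal 0 1 with hγ
  have hprob : IsProbabilityMeasure γ := by infer_instance
  -- integrability
  have hcont : Continuous (fun z : ℝ => Real.tanh (mhat + c * z)) :=
    my_continuous_tanh.comp (by continuity)
  have htb : ∀ z : ℝ, ‖Real.tanh (mhat + c * z)‖ ≤ 1 := fun z => my_abs_tanh_le _
  have hint1 : Integrable (fun z => Real.tanh (mhat + c * z)) γ := by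
    refine (integrable_const (1:ℝ)).mono' hcont.aestronglyMeasurable ?_
    exact ae_of_all _ htb
  have hint2 : Integrable (fun z => (Real.tanh (mhat + c * z)) ^ 2) γ := by
    refine (integrable_const (1:ℝ)).mono' (hcont.pow 2).aestronglyMeasurable ?_
    refine ae_of_all _ fun z => ?_
    rw [Real.norm_eq_abs, abs_pow]
    calc |Real.tanh (mhat + c*z)| ^ 2 ≤ 1 ^ 2 := by
          gcongr; exact htb z
      _ = 1 := one_pow 2
  suffices hkey : ∫ z, (Real.tanh (mhat + c * z) - (Real.tanh (mhat + c * z)) ^ 2) ∂γ = 0 by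
    rw [integral_sub hint1 hint2] at hkey
    linarith
  -- rewrite as Lebesgue integral with density
  have hγd : γ = volume.withDensity (fun z => ((gaussianPDFReal 0 1 z).toNNReal : ℝ≥0∞)) := by
    rw [hγ, gaussianReal_of_var_ne_zero 0 one_ne_zero]
    rfl
  set F : ℝ → ℝ := fun z => Real.tanh (mhat + c * z) - (Real.tanh (mhat + c * z)) ^ 2 with hF
  have hmeas : Measurable (fun z => (gaussianPDFReal 0 1 z).toNNReal) :=
    (measurable_gaussianPDFReal 0 1).real_toNNReal
  have hwd : ∫ z, F z ∂γ = ∫ z, gaussianPDFReal 0 1 z * F z := by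
    rw [hγd, integral_withDensity_eq_integral_smul hmeas]
    congr 1
    ext z
    simp [NNReal.smul_def, Real.coe_toNNReal _ (gaussianPDFReal_nonneg 0 1 z)]
  set H : ℝ → ℝ := fun z => gaussianPDFReal 0 1 z * F z with hH
  have hflip : ∀ z : ℝ, H (-z - 2*c) = - H z := by
    intro z
    have hx : mhat + c * (-z - 2*c) = -(mhat + c * z) := by
      rw [← hcc]; ring
    simp only [hH, hF, hx]
    rw [pdf_flip]
    have hkey := tanh_flip (mhat + c * z)
    have harg : -(2 * (c*c + c*z)) = -(2 * (mhat + c * z)) := by rw [hcc]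
    rw [harg]
    linear_combination gaussianPDFReal 0 1 z * hkey
  have hcov : ∫ z, H z = ∫ z, H (-z - 2*c) := by
    have e1 : ∫ z, H (-z - 2*c) = ∫ z, H (-(z + 2*c)) := by
      congr 1; ext z; ring_nf
    have e2 : ∫ z, H (-(z + 2*c)) = ∫ z, H (-z) :=
      integral_add_right_eq_self (fun y => H (-y)) (2*c)
    rw [e1, e2, integral_neg_eq_self]
  have hhalf : ∫ z, H z = - ∫ z, H z := by
    conv_lhs => rw [hcov]
    simp_rw [hflip]
    exact integral_neg H
  have hzero : ∫ z, H z = 0 := by linarith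
  rw [hwd]
  exact hzero
end
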